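/- arXiv:math/0406395 — 2 statements merged into one kernel-verified Lean document; each statement's English description precedes it below -/
import Mathlib

section
/- For the kernel J(n,m;z) = -b_m G(n,m;z) + (1 - a_{m-1}c_{m-1}) G(n,m-1;z) with z in the closed unit disk (z ≠ 0, ±1), the bound |J(n,m;z) z^{m-n}| ≤ |z| · d_m · min(m-n, 2/|z²-1|) holds for m > n, where d_m = |b_m| + |1 - a_{m-1} c_{m-1}|. -/
noncomputable def G (z : ℂ) (n m : ℕ) : ℂ :=
  if n < m then (z ^ ((m : ℤ) - n) - z ^ ((n : ℤ) - m)) / (z - z⁻¹) else 0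

noncomputable def Jker (a b c : ℕ → ℂ) (z : ℂ) (n m : ℕ) : ℂ :=
  -b m * G z n m + (1 - a (m - 1) * c (m - 1)) * G z n (m - 1)

lemma G_mul (z : ℂ) (hz : z ≠ 0) (hz2 : z ^ 2 ≠ 1) (n m : ℕ) (h : n < m) :
    G z n m * z ^ (m - n) = z * (z ^ (2 * (m - n)) - 1) / (z ^ 2 - 1) := by
  have hk : ((m : ℤ) - n) = ((m - n : ℕ) : ℤ) := by omega
  have hk2 : ((n : ℤ) - m) = -((m - n : ℕ) : ℤ) := by omega
  rw [G, if_pos h, hk, hk2, zpow_neg, zpow_natCast]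
  have hzk : z ^ (m - n) ≠ 0 := pow_ne_zero _ hz
  have e1 : z - z⁻¹ = (z ^ 2 - 1) / z := by
    rw [eq_div_iff hz, sub_mul, inv_mul_cancel₀ hz, sq]
  have e2 : z ^ (m - n) - (z ^ (m - n))⁻¹ = (z ^ (2 * (m - n)) - 1) / z ^ (m - n) := by
    rw [eq_div_iff hzk, sub_mul, inv_mul_cancel₀ hzk, two_mul, pow_add]
  rw [e1, e2, div_div_div_comm]
  have hs : z ^ 2 - 1 ≠ 0 := sub_ne_zero.mpr hz2
  field_simp

lemma geom_bound (z : ℂ) (hz1 : ‖z‖ ≤ 1) (hz2 : z ^ 2 ≠ 1) (k : ℕ) :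
    ‖(z ^ (2 * k) - 1) / (z ^ 2 - 1)‖ ≤
      min (k : ℝ) (2 / ‖z ^ 2 - 1‖) := by
  have hs : z ^ 2 - 1 ≠ 0 := sub_ne_zero.mpr hz2
  have hsabs : 0 < ‖z ^ 2 - 1‖ := by
    exact norm_pos_iff.mpr hs
  refine le_min ?_ ?_
  · have hgeom : (z ^ (2 * k) - 1) / (z ^ 2 - 1) = ∑ i ∈ Finset.range k, (z ^ 2) ^ i := by
      rw [geom_sum_eq hz2, pow_mul]
    rw [hgeom]
    calc ‖∑ i ∈ Finset.range k, (z ^ 2) ^ i‖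
        ≤ ∑ i ∈ Finset.range k, ‖(z ^ 2) ^ i‖ := by
          exact norm_sum_le _ _
      _ ≤ ∑ _i ∈ Finset.range k, (1 : ℝ) := by
          refine Finset.sum_le_sum fun i _ => ?_
          rw [norm_pow, norm_pow]
          exact pow_le_one₀ (by positivity) (pow_le_one₀ (by positivity) hz1)
      _ = k := by simp
  · rw [norm_div]
    gcongr
    calc ‖z ^ (2 * k) - 1‖ ≤ ‖z ^ (2 * k)‖ + 1 := by
          simpa using norm_sub_le (z ^ (2 * k)) 1
      _ ≤ 1 + 1 := by
          gcongr
          rw [norm_pow]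
          exact pow_le_one₀ (by positivity) hz1
      _ = 2 := by norm_num

theorem Jker_bound (a b c : ℕ → ℂ) (z : ℂ) (hz : z ≠ 0)
    (hz1 : ‖z‖ ≤ 1) (hz2 : z ^ 2 ≠ 1)
    (n m : ℕ) (h : n < m) :
    ‖Jker a b c z n m * z ^ (m - n)‖ ≤
      ‖z‖ * (‖b m‖ + ‖1 - a (m - 1) * c (m - 1)‖) *
        min ((m : ℝ) - n) (2 / ‖z ^ 2 - 1‖) := by
  have hs : z ^ 2 - 1 ≠ 0 := sub_ne_zero.mpr hz2
  have hD0 : 0 < ‖z ^ 2 - 1‖ := by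
    exact norm_pos_iff.mpr hs
  set M : ℝ := min ((m : ℝ) - n) (2 / ‖z ^ 2 - 1‖) with hMdef
  have hmn : (n : ℝ) < m := by exact_mod_cast h
  have hM0 : 0 ≤ M := le_min (by linarith) (by positivity)
  have hcast : ((m - n : ℕ) : ℝ) = (m : ℝ) - n := by
    rw [Nat.cast_sub h.le]
  have hza : 0 ≤ ‖z‖ := norm_nonneg z
  have h1 : ‖G z n m * z ^ (m - n)‖ ≤ ‖z‖ * M := by
    rw [G_mul z hz hz2 n m h, mul_div_assoc, norm_mul]
    have hg := geom_bound z hz1 hz2 (m - n)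
    rw [hcast] at hg
    exact mul_le_mul_of_nonneg_left hg hza
  have h2 : ‖G z n (m - 1) * z ^ (m - n)‖ ≤ ‖z‖ * M := by
    rcases Nat.lt_or_ge n (m - 1) with hlt | hge
    · have hpow : z ^ (m - n) = z ^ (m - 1 - n) * z := by
        rw [← pow_succ]; congr 1; omega
      rw [show G z n (m - 1) * z ^ (m - n) = G z n (m - 1) * z ^ (m - 1 - n) * z by
            rw [hpow]; ring,
          norm_mul, G_mul z hz hz2 n (m - 1) hlt, mul_div_assoc, norm_mul]
      have hg := geom_bound z hz1 hz2 (m - 1 - n)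
      have hle : ‖(z ^ (2 * (m - 1 - n)) - 1) / (z ^ 2 - 1)‖ ≤ M := by
        refine hg.trans (min_le_min ?_ le_rfl)
        have : ((m - 1 - n : ℕ) : ℝ) ≤ ((m - n : ℕ) : ℝ) := by
          exact_mod_cast Nat.sub_le_sub_right (Nat.sub_le m 1) n
        rw [hcast] at this; exact this
      calc ‖z‖ * ‖(z ^ (2 * (m - 1 - n)) - 1) / (z ^ 2 - 1)‖ *
            ‖z‖
          ≤ ‖z‖ * M * 1 :=
            mul_le_mul (mul_le_mul_of_nonneg_left hle hza) hz1 hza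
              (mul_nonneg hza hM0)
        _ = ‖z‖ * M := mul_one _
    · have hneg : ¬ n < m - 1 := by omega
      rw [G, if_neg hneg, zero_mul, norm_zero]
      exact mul_nonneg hza hM0
  have hexp : Jker a b c z n m * z ^ (m - n) =
      -b m * (G z n m * z ^ (m - n)) +
        (1 - a (m - 1) * c (m - 1)) * (G z n (m - 1) * z ^ (m - n)) := by
    rw [Jker]; ring
  rw [hexp]
  calc ‖-b m * (G z n m * z ^ (m - n)) +
          (1 - a (m - 1) * c (m - 1)) * (G z n (m - 1) * z ^ (m - n))‖
      ≤ ‖-b m * (G z n m * z ^ (m - n))‖ +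
          ‖(1 - a (m - 1) * c (m - 1)) * (G z n (m - 1) * z ^ (m - n))‖ :=
        norm_add_le _ _
    _ = ‖b m‖ * ‖G z n m * z ^ (m - n)‖ +
          ‖1 - a (m - 1) * c (m - 1)‖ *
            ‖G z n (m - 1) * z ^ (m - n)‖ := by
        simp [map_mul]
    _ ≤ ‖b m‖ * (‖z‖ * M) +
          ‖1 - a (m - 1) * c (m - 1)‖ * (‖z‖ * M) := by
        gcongr
    _ = ‖z‖ *
          (‖b m‖ + ‖1 - a (m - 1) * c (m - 1)‖) * M := by ring
end

section
/- Suppose (v_n(z)) solves the modified recurrence x_{m-1} + b_m x_m + a_m c_m x_{m+1} = (z + z^{-1}) x_m for all m ≥ 1, with |z| < 1, z ≠ 0, and v_n(z) z^{-n} → 1 as n → ∞. Then v_n satisfies the discrete integral equation v_n(z) = z^n + Σ_{m=n+1}^∞ J(n,m;z) v_m(z), where J(n,m;z) = -b_m G(n,m;z) + (1 - a_{m-1}c_{m-1}) G(n,m-1;z). -/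
open Filter

noncomputable def gk (z : ℂ) (k : ℤ) : ℂ := (z ^ k - z ^ (-k)) / (z - z⁻¹)

lemma gk_rec (z : ℂ) (hz : z ≠ 0) (k : ℤ) :
    gk z (k + 1) + gk z (k - 1) = (z + z⁻¹) * gk z k := by
  unfold gk
  have e1 : z ^ (k + 1) = z ^ k * z := zpow_add_one₀ hz k
  have e2 : z ^ (-(k + 1)) = z ^ (-k) * z⁻¹ := by
    rw [show -(k + 1) = -k + -1 by ring, zpow_add₀ hz, zpow_neg_one]
  have e3 : z ^ (k - 1) = z ^ k * z⁻¹ := by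
    rw [show k - 1 = k + -1 by ring, zpow_add₀ hz, zpow_neg_one]
  have e4 : z ^ (-(k - 1)) = z ^ (-k) * z := by
    rw [show -(k - 1) = -k + 1 by ring, zpow_add₀ hz, zpow_one]
  rw [e1, e2, e3, e4]
  ring

lemma G_eq (z : ℂ) (n m : ℕ) (h : n ≤ m) : G z n m = gk z ((m : ℤ) - n) := by
  unfold G gk
  rcases lt_or_eq_of_le h with h' | h'
  · rw [if_pos h', show (n : ℤ) - m = -((m : ℤ) - n) by ring]
  · subst h'
    rw [if_neg (lt_irrefl n)]
    simp

lemma gk_one (z : ℂ) (hden : z - z⁻¹ ≠ 0) : gk z 1 = 1 := by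
  unfold gk
  rw [zpow_one, zpow_neg_one, div_self hden]

lemma gk_zero (z : ℂ) : gk z 0 = 0 := by unfold gk; simp

theorem recurrence_implies_integral_equation (a b c : ℕ → ℂ)
    (ha0 : a 0 = 1) (hc0 : c 0 = 1)
    (hd : Summable (fun m : ℕ => ‖b m‖ + ‖1 - a (m - 1) * c (m - 1)‖))
    (z : ℂ) (hz : z ≠ 0) (hz1 : ‖z‖ < 1)
    (v : ℕ → ℂ)
    (hrec : ∀ m : ℕ, 1 ≤ m →
      v (m - 1) + b m * v m + a m * c m * v (m + 1) = (z + z⁻¹) * v m)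
    (hlim : Filter.Tendsto (fun n : ℕ => v n * z ^ (-(n : ℤ))) Filter.atTop (nhds 1))
    (hsum : ∀ n : ℕ, Summable (fun m : ℕ => ‖Jker a b c z n (n + 1 + m) * v (n + 1 + m)‖)) :
    ∀ n : ℕ, v n = z ^ n + ∑' m : ℕ, Jker a b c z n (n + 1 + m) * v (n + 1 + m) := by
  intro n
  have habs : ‖z‖ * ‖z‖ < 1 := by
    nlinarith [norm_nonneg z]
  have hden : z - z⁻¹ ≠ 0 := by
    intro h
    have h2 : z * z = 1 := by
      field_simp at h
      linear_combination h
    have := congrArg (fun w : ℂ => ‖w‖) h2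
    simp only [norm_mul, norm_one] at this
    rw [this] at habs
    exact lt_irrefl 1 habs
  -- Green function recurrence
  have hGrec : ∀ k : ℕ, G z n (n + k) + G z n (n + k + 2) = (z + z⁻¹) * G z n (n + k + 1) := by
    intro k
    rw [G_eq z n (n + k) (by omega), G_eq z n (n + k + 2) (by omega),
      G_eq z n (n + k + 1) (by omega)]
    have h1 : ((n + k : ℕ) : ℤ) - n = (k : ℤ) := by push_cast; ring
    have h2 : ((n + k + 2 : ℕ) : ℤ) - n = (k : ℤ) + 2 := by push_cast; ring
    have h3 : ((n + k + 1 : ℕ) : ℤ) - n = (k : ℤ) + 1 := by push_cast; ring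
    rw [h1, h2, h3]
    have := gk_rec z hz ((k : ℤ) + 1)
    rw [show (k : ℤ) + 1 + 1 = (k : ℤ) + 2 by ring, show (k : ℤ) + 1 - 1 = (k : ℤ) by ring] at this
    linear_combination this
  have hGnn : G z n n = 0 := by rw [G_eq z n n le_rfl]; simp [gk_zero]
  have hGn1 : G z n (n + 1) = 1 := by
    rw [G_eq z n (n + 1) (by omega), show ((n + 1 : ℕ) : ℤ) - n = 1 by push_cast; ring]
    exact gk_one z hden
  -- key partial sum identity
  have key : ∀ N : ℕ, (∑ k ∈ Finset.range N, Jker a b c z n (n + 1 + k) * v (n + 1 + k))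
      = v n + (G z n (n + N) * v (n + N + 1) - G z n (n + N + 1) * v (n + N))
        - (1 - a (n + N) * c (n + N)) * G z n (n + N) * v (n + N + 1) := by
    intro N
    induction N with
    | zero => simp [hGnn, hGn1]
    | succ N ih =>
      rw [Finset.sum_range_succ, ih]
      have hR := hrec (n + 1 + N) (by omega)
      rw [show n + 1 + N - 1 = n + N by omega] at hR
      have hGr := hGrec N
      unfold Jker
      rw [show n + 1 + N - 1 = n + N by omega,
        show n + 1 + N = n + N + 1 by omega,
        show n + (N + 1) = n + N + 1 by omega,
        show n + N + 1 + 1 = n + N + 2 by omega]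
      rw [show n + 1 + N = n + N + 1 by omega, show n + N + 1 + 1 = n + N + 2 by omega] at hR
      linear_combination (v (n + N + 1)) * hGr - (G z n (n + N + 1)) * hR
  -- shifted limit of v N z^{-N}
  have hshift : ∀ s : ℕ, Tendsto (fun N : ℕ => v (n + N + s) * z ^ (-((n + N + s : ℕ) : ℤ)))
      atTop (nhds 1) := by
    intro s
    have hmono : Tendsto (fun N : ℕ => n + N + s) atTop atTop :=
      tendsto_atTop_mono (fun N => by simp only [id_eq]; omega) tendsto_id
    exact hlim.comp hmono
  have hpow : Tendsto (fun N : ℕ => (z ^ 2) ^ N) atTop (nhds 0) := by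
    apply tendsto_pow_atTop_nhds_zero_of_norm_lt_one
    rw [norm_pow]
    nlinarith [norm_nonneg z]
  have hcongr : ∀ e1 e2 : ℤ, e1 = e2 → z ^ e1 = z ^ e2 := fun _ _ h => by rw [h]
  have haux : ∀ r s : ℕ, Tendsto (fun N : ℕ => gk z ((N : ℤ) + r) * v (n + N + s)) atTop
      (nhds (-(z ^ ((n : ℤ) + s - r)) / (z - z⁻¹))) := by
    intro r s
    have heq : ∀ N : ℕ, gk z ((N : ℤ) + r) * v (n + N + s)
        = ((z ^ 2) ^ N * z ^ ((n : ℤ) + s + r) - z ^ ((n : ℤ) + s - r)) / (z - z⁻¹)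
          * (v (n + N + s) * z ^ (-((n + N + s : ℕ) : ℤ))) := by
      intro N
      have h2 : ((z : ℂ) ^ 2) ^ N = z ^ (2 * (N : ℤ)) := by
        rw [← pow_mul, ← zpow_natCast z (2 * N)]
        push_cast
        ring_nf
      have hc : ((n + N + s : ℕ) : ℤ) = (n : ℤ) + N + s := by push_cast; ring
      have hkey : (z ^ ((N : ℤ) + r) - z ^ (-((N : ℤ) + r))) * z ^ (((n + N + s : ℕ)) : ℤ)
          = (z ^ 2) ^ N * z ^ ((n : ℤ) + s + r) - z ^ ((n : ℤ) + s - r) := by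
        rw [hc, sub_mul, ← zpow_add₀ hz, ← zpow_add₀ hz, h2, ← zpow_add₀ hz,
          hcongr ((N : ℤ) + r + ((n : ℤ) + N + s)) (2 * (N : ℤ) + ((n : ℤ) + s + r)) (by ring),
          hcongr (-((N : ℤ) + r) + ((n : ℤ) + N + s)) ((n : ℤ) + s - r) (by ring)]
      have hU : v (n + N + s)
          = z ^ (((n + N + s : ℕ)) : ℤ) * (v (n + N + s) * z ^ (-((n + N + s : ℕ) : ℤ))) := by
        rw [mul_comm (v _), ← mul_assoc, ← zpow_add₀ hz,
          hcongr _ 0 (by push_cast; ring), zpow_zero, one_mul]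
      calc gk z ((N : ℤ) + r) * v (n + N + s)
          = (z ^ ((N : ℤ) + r) - z ^ (-((N : ℤ) + r))) * z ^ (((n + N + s : ℕ)) : ℤ) / (z - z⁻¹)
            * (v (n + N + s) * z ^ (-((n + N + s : ℕ) : ℤ))) := by
            conv_lhs => rw [hU]
            unfold gk
            ring
        _ = _ := by rw [hkey]
    have hlim' := (((hpow.mul_const (z ^ ((n : ℤ) + s + r))).sub_const
        (z ^ ((n : ℤ) + s - r))).div_const (z - z⁻¹)).mul (hshift s)
    have h0 : ((0 : ℂ) * z ^ ((n : ℤ) + s + r) - z ^ ((n : ℤ) + s - r)) / (z - z⁻¹) * 1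
        = -(z ^ ((n : ℤ) + s - r)) / (z - z⁻¹) := by ring
    rw [h0] at hlim'
    exact Tendsto.congr (fun N => (heq N).symm) hlim'
  have hL1 : Tendsto (fun N : ℕ => G z n (n + N) * v (n + N + 1)) atTop
      (nhds (-(z ^ ((n : ℤ) + 1 - (0 : ℕ))) / (z - z⁻¹))) := by
    apply Tendsto.congr _ (haux 0 1)
    intro N
    rw [G_eq z n (n + N) (by omega)]
    congr 2
    push_cast
    ring
  have hL2 : Tendsto (fun N : ℕ => G z n (n + N + 1) * v (n + N)) atTop
      (nhds (-(z ^ ((n : ℤ) + (0 : ℕ) - (1 : ℕ))) / (z - z⁻¹))) := by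
    apply Tendsto.congr _ (haux 1 0)
    intro N
    rw [G_eq z n (n + N + 1) (by omega)]
    congr 2
    push_cast
    ring
  -- 1 - a c tends to zero
  have hb0 := hd.tendsto_atTop_zero
  have hac1 : Tendsto (fun m : ℕ => ‖1 - a (m - 1) * c (m - 1)‖) atTop (nhds 0) :=
    squeeze_zero (fun m => norm_nonneg _)
      (fun m => le_add_of_nonneg_left (norm_nonneg _)) hb0
  have hac : Tendsto (fun N : ℕ => (1 : ℂ) - a (n + N) * c (n + N)) atTop (nhds 0) := by
    rw [tendsto_zero_iff_norm_tendsto_zero]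
    have hmono : Tendsto (fun N : ℕ => n + N + 1) atTop atTop :=
      tendsto_atTop_mono (fun N => by simp only [id_eq]; omega) tendsto_id
    have := hac1.comp hmono
    simpa [Function.comp_def] using this
  have hthird : Tendsto (fun N : ℕ =>
      (1 - a (n + N) * c (n + N)) * G z n (n + N) * v (n + N + 1)) atTop (nhds 0) := by
    have := hac.mul hL1
    rw [zero_mul] at this
    apply Tendsto.congr _ this
    intro N
    ring
  -- combine
  have hlimval : v n + (-(z ^ ((n : ℤ) + 1 - (0 : ℕ))) / (z - z⁻¹)
      - -(z ^ ((n : ℤ) + (0 : ℕ) - (1 : ℕ))) / (z - z⁻¹)) - 0 = v n - z ^ n := by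
    have e1 : z ^ ((n : ℤ) + 1 - (0 : ℕ)) = z ^ (n : ℤ) * z := by
      rw [hcongr ((n : ℤ) + 1 - (0 : ℕ)) ((n : ℤ) + 1) (by push_cast; ring), zpow_add_one₀ hz]
    have e2 : z ^ ((n : ℤ) + (0 : ℕ) - (1 : ℕ)) = z ^ (n : ℤ) * z⁻¹ := by
      rw [hcongr ((n : ℤ) + (0 : ℕ) - (1 : ℕ)) ((n : ℤ) + -1) (by push_cast; ring),
        zpow_add₀ hz, zpow_neg_one]
    rw [e1, e2, zpow_natCast]
    have hkey2 : -(z ^ n * z) / (z - z⁻¹) - -(z ^ n * z⁻¹) / (z - z⁻¹) = -z ^ n := by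
      rw [div_sub_div_same, show -(z ^ n * z) - -(z ^ n * z⁻¹) = -z ^ n * (z - z⁻¹) by ring,
        mul_div_assoc, div_self hden, mul_one]
    linear_combination hkey2
  have hF : Tendsto (fun N : ℕ =>
      v n + (G z n (n + N) * v (n + N + 1) - G z n (n + N + 1) * v (n + N))
        - (1 - a (n + N) * c (n + N)) * G z n (n + N) * v (n + N + 1)) atTop
      (nhds (v n - z ^ n)) := by
    rw [← hlimval]
    exact (tendsto_const_nhds.add (hL1.sub hL2)).sub hthird
  have hS : Summable (fun m : ℕ => Jker a b c z n (n + 1 + m) * v (n + 1 + m)) :=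
    Summable.of_norm (hsum n)
  have hps := hS.hasSum.tendsto_sum_nat
  have hps' : Tendsto (fun N : ℕ => ∑ k ∈ Finset.range N,
      Jker a b c z n (n + 1 + k) * v (n + 1 + k)) atTop (nhds (v n - z ^ n)) :=
    Tendsto.congr (fun N => (key N).symm) hF
  have htsum : (∑' m : ℕ, Jker a b c z n (n + 1 + m) * v (n + 1 + m)) = v n - z ^ n :=
    tendsto_nhds_unique hps hps'
  rw [htsum]
  ring
end
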